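/- arXiv:2111.10862 — 5 statements merged into one kernel-verified Lean document; each statement's English description precedes it below -/
import Mathlib

section
/- Let C be a small category and X : Cᵒᵖ ⥤ Type a presheaf. If X is isomorphic to a coproduct ∐_{i : I} yoneda.obj (Γ i) of representable presheaves, for some set I and family Γ : I → C, then every connected component of the category of elements of X has a terminal object; that is, for every object (Γ, x) of the category of elements of X there is an object (Γ₀, x₀) zigzag-related to (Γ, x) such that every object zigzag-related to (Γ₀, x₀) admits exactly one morphism to (Γ₀, x₀). -/
open CategoryTheory Opposite Limits

/-- The category of elements of a presheaf `X : Cᵒᵖ ⥤ Type`, with the convention of the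
paper: objects are pairs `(Γ, x)` with `x ∈ X(Γ)`. -/
structure PElements {C : Type} [SmallCategory C] (X : Cᵒᵖ ⥤ Type) where
  ctx : C
  elt : X.obj (op ctx)

/-- A morphism `(Δ, y) ⟶ (Γ, x)` is a morphism `σ : Δ ⟶ Γ` of `C` with `X.map σ.op x = y`. -/
instance {C : Type} [SmallCategory C] (X : Cᵒᵖ ⥤ Type) : Category (PElements X) where
  Hom a b := { σ : a.ctx ⟶ b.ctx // X.map σ.op b.elt = a.elt }
  id a := ⟨𝟙 a.ctx, by simp⟩
  comp {a b c} f g := ⟨f.1 ≫ g.1, by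
    rw [op_comp, FunctorToTypes.map_comp_apply, g.2, f.2]⟩
  id_comp f := Subtype.ext (Category.id_comp f.1)
  comp_id f := Subtype.ext (Category.comp_id f.1)
  assoc f g h := Subtype.ext (Category.assoc f.1 g.1 h.1)

namespace FamRepAux

variable {C : Type} [SmallCategory C] {I : Type} (Γ : I → C)

/-- Pointwise description of the coproduct of representables. -/
noncomputable def φ (c : C) :
    (∐ fun i => yoneda.obj (Γ i)).obj (op c) ≃ Σ i, (c ⟶ Γ i) :=
  (PreservesCoproduct.iso ((evaluation Cᵒᵖ Type).obj (op c)) (fun i => yoneda.obj (Γ i)) ≪≫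
      Types.coproductIso fun i => (c ⟶ Γ i)).toEquiv

lemma φ_ι (c : C) (i : I) (σ : c ⟶ Γ i) :
    φ Γ c ((Sigma.ι (fun i => yoneda.obj (Γ i)) i).app (op c) σ) = ⟨i, σ⟩ := by
  have h2' : sigmaComparison ((evaluation Cᵒᵖ Type).obj (op c)) (fun i => yoneda.obj (Γ i))
      (Sigma.ι (fun b => ((evaluation Cᵒᵖ Type).obj (op c)).obj (yoneda.obj (Γ b))) i σ)
      = (Sigma.ι (fun i => yoneda.obj (Γ i)) i).app (op c) σ :=
    ConcreteCategory.congr_hom (ι_comp_sigmaComparison ((evaluation Cᵒᵖ Type).obj (op c))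
      (fun i => yoneda.obj (Γ i)) i) σ
  have h3 : (sigmaComparison ((evaluation Cᵒᵖ Type).obj (op c)) (fun i => yoneda.obj (Γ i))) ≫
      (PreservesCoproduct.iso ((evaluation Cᵒᵖ Type).obj (op c))
        (fun i => yoneda.obj (Γ i))).hom = 𝟙 _ := by
    rw [← PreservesCoproduct.inv_hom]
    exact Iso.inv_hom_id _
  have h4' : (Types.coproductIso fun i => (c ⟶ Γ i)).hom
      (Sigma.ι (fun b => ((evaluation Cᵒᵖ Type).obj (op c)).obj (yoneda.obj (Γ b))) i σ)
      = ⟨i, σ⟩ :=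
    ConcreteCategory.congr_hom (Types.coproductIso_ι_comp_hom (fun i => (c ⟶ Γ i)) i) σ
  show (Types.coproductIso fun i => (c ⟶ Γ i)).hom
      ((PreservesCoproduct.iso ((evaluation Cᵒᵖ Type).obj (op c))
        (fun i => yoneda.obj (Γ i))).hom
        ((Sigma.ι (fun i => yoneda.obj (Γ i)) i).app (op c) σ)) = ⟨i, σ⟩
  rw [← h2']
  have h3' := ConcreteCategory.congr_hom h3 (Sigma.ι (fun b =>
    ((evaluation Cᵒᵖ Type).obj (op c)).obj (yoneda.obj (Γ b))) i σ)
  simp only [types_comp_apply, types_id_apply] at h3'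
  rw [h3']
  exact h4'

lemma φ_natural {c d : C} (g : d ⟶ c) (x : (∐ fun i => yoneda.obj (Γ i)).obj (op c)) :
    φ Γ d ((∐ fun i => yoneda.obj (Γ i)).map g.op x)
      = ⟨(φ Γ c x).1, g ≫ (φ Γ c x).2⟩ := by
  obtain ⟨y, rfl⟩ : ∃ y, (φ Γ c).symm y = x := ⟨φ Γ c x, (φ Γ c).symm_apply_apply x⟩
  obtain ⟨i, σ⟩ := y
  have hx : (φ Γ c).symm ⟨i, σ⟩ = (Sigma.ι (fun i => yoneda.obj (Γ i)) i).app (op c) σ := by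
    apply (φ Γ c).injective
    rw [(φ Γ c).apply_symm_apply, φ_ι]
  rw [hx]
  have hnat := ConcreteCategory.congr_hom ((Sigma.ι (fun i => yoneda.obj (Γ i)) i).naturality g.op) σ
  simp only [types_comp_apply] at hnat
  rw [← hnat]
  have : (yoneda.obj (Γ i)).map g.op σ = g ≫ σ := rfl
  rw [this, φ_ι, φ_ι]

end FamRepAux

/-- If a presheaf `X` is isomorphic to a coproduct of representable presheaves, then every
connected component of its category of elements has a terminal object. -/
theorem familiallyRepresentable_of_coproduct_representables
    {C : Type} [SmallCategory C] (X : Cᵒᵖ ⥤ Type)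
    (I : Type) (Γ : I → C) (h : Nonempty (X ≅ ∐ fun i => yoneda.obj (Γ i))) :
    ∀ e : PElements X, ∃ t : PElements X, Zigzag e t ∧
      ∀ e' : PElements X, Zigzag e' t → ∃! _ : e' ⟶ t, True := by
  obtain ⟨f⟩ := h
  -- the "sorted" description of an element of the category of elements
  set s : ∀ e : PElements X, Σ i, (e.ctx ⟶ Γ i) :=
    fun e => FamRepAux.φ Γ e.ctx (f.hom.app (op e.ctx) e.elt) with hs
  -- functoriality of `s`
  have hfunct : ∀ {a b : PElements X} (g : a ⟶ b), s a = ⟨(s b).1, g.1 ≫ (s b).2⟩ := by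
    intro a b g
    have h1 : a.elt = X.map g.1.op b.elt := g.2.symm
    have h2 : f.hom.app (op a.ctx) (X.map g.1.op b.elt)
        = (∐ fun i => yoneda.obj (Γ i)).map g.1.op (f.hom.app (op b.ctx) b.elt) :=
      ConcreteCategory.congr_hom (f.hom.naturality g.1.op) b.elt
    have h3 := FamRepAux.φ_natural Γ g.1 (f.hom.app (op b.ctx) b.elt)
    rw [← h2, ← h1] at h3
    exact h3
  have hfst : ∀ {a b : PElements X}, Zigzag a b → (s a).1 = (s b).1 := by
    intro a b hz
    induction hz with
    | refl => rfl
    | tail _ hzag ih =>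
      rcases hzag with ⟨⟨g⟩⟩ | ⟨⟨g⟩⟩
      · rw [ih, hfunct g]
      · rw [ih, hfunct g]
  intro e
  set i0 : I := (s e).1 with hi0
  -- injectivity of the element description
  have hinj : ∀ (c : C) (x y : X.obj (op c)),
      FamRepAux.φ Γ c (f.hom.app (op c) x) = FamRepAux.φ Γ c (f.hom.app (op c) y) → x = y := by
    intro c x y hxy
    have h1 := (FamRepAux.φ Γ c).injective hxy
    have h2 : f.inv.app (op c) (f.hom.app (op c) x) = f.inv.app (op c) (f.hom.app (op c) y) := by
      rw [h1]
    simpa using h2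
  -- the terminal object of the component
  set t : PElements X :=
    ⟨Γ i0, f.inv.app (op (Γ i0)) ((FamRepAux.φ Γ (Γ i0)).symm ⟨i0, 𝟙 (Γ i0)⟩)⟩ with ht
  have hst : s t = ⟨i0, 𝟙 (Γ i0)⟩ := by
    rw [hs]
    simp only [ht]
    have h1 : f.hom.app (op (Γ i0)) (f.inv.app (op (Γ i0))
        ((FamRepAux.φ Γ (Γ i0)).symm ⟨i0, 𝟙 (Γ i0)⟩))
        = (FamRepAux.φ Γ (Γ i0)).symm ⟨i0, 𝟙 (Γ i0)⟩ := by
      have := ConcreteCategory.congr_hom (f.inv_hom_id_app (op (Γ i0))) ((FamRepAux.φ Γ (Γ i0)).symm ⟨i0, 𝟙 (Γ i0)⟩)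
      simp only [types_comp_apply, types_id_apply] at this
      exact this
    rw [h1, (FamRepAux.φ Γ (Γ i0)).apply_symm_apply]
  -- a canonical morphism to `t`
  have key : ∀ (e' : PElements X) (σ : e'.ctx ⟶ Γ i0), s e' = ⟨i0, σ⟩ →
      ∃ g : e' ⟶ t, g.1 = σ := by
    intro e' σ hse
    refine ⟨⟨σ, ?_⟩, rfl⟩
    apply hinj e'.ctx
    have h2 : f.hom.app (op e'.ctx) (X.map σ.op t.elt)
        = (∐ fun i => yoneda.obj (Γ i)).map σ.op (f.hom.app (op t.ctx) t.elt) :=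
      ConcreteCategory.congr_hom (f.hom.naturality σ.op) t.elt
    have h3 : FamRepAux.φ Γ e'.ctx (f.hom.app (op e'.ctx) (X.map σ.op t.elt)) = ⟨i0, σ⟩ := by
      rw [h2, FamRepAux.φ_natural]
      have h4 : FamRepAux.φ Γ t.ctx (f.hom.app (op t.ctx) t.elt) = s t := rfl
      rw [h4, hst]
      simp
    rw [h3]
    exact hse.symm
  -- the computation of `s` on any morphism into `t`
  have hom_eq : ∀ (e' : PElements X) (g : e' ⟶ t), s e' = ⟨i0, g.1⟩ := by
    intro e' g
    rw [hfunct g, hst]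
    simp
    exact Category.comp_id _
  refine ⟨t, ?_, ?_⟩
  · obtain ⟨g, -⟩ := key e (s e).2 rfl
    exact Zigzag.of_hom g
  · intro e' hz
    have hfst' : (s e').1 = i0 := by
      rw [hfst hz]
      exact congrArg Sigma.fst hst
    rcases hse : s e' with ⟨j, τ⟩
    have hj : j = i0 := by rw [hse] at hfst'; exact hfst'
    subst hj
    obtain ⟨g, -⟩ := key e' τ hse
    refine ⟨g, trivial, fun g' _ => ?_⟩
    have h1 := hom_eq e' g
    have h2 := hom_eq e' g'
    rw [h1] at h2
    have h3 : g'.1 = g.1 := (eq_of_heq (Sigma.mk.inj_iff.mp h2).2).symm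
    exact Subtype.ext h3
end

section
/- Let C be a small category and X : Cᵒᵖ ⥤ Type a presheaf. If every connected component of the category of elements of X has a terminal object (i.e., every object (Γ, x) of the category of elements is zigzag-related to an object (Γ₀, x₀) such that every object zigzag-related to (Γ₀, x₀) admits exactly one morphism to (Γ₀, x₀)), then X is isomorphic to a coproduct ∐_{i : I} yoneda.obj (Γ i) of representable presheaves for some set I and family Γ : I → C. -/
open CategoryTheory Opposite Limits

/-- If every connected component of the category of elements of a presheaf `X` has a
terminal object, then `X` is a coproduct of representable presheaves. -/
theorem coproduct_representables_of_familiallyRepresentable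
    {C : Type} [SmallCategory C] (X : Cᵒᵖ ⥤ Type)
    (h : ∀ e : PElements X, ∃ t : PElements X, Zigzag e t ∧
      ∀ e' : PElements X, Zigzag e' t → ∃! _ : e' ⟶ t, True) :
    ∃ (I : Type) (Γ : I → C), Nonempty (X ≅ ∐ fun i => yoneda.obj (Γ i)) := by

  classical
  set S := Zigzag.setoid (PElements X) with hS
  set I := Quotient S with hI
  set t : I → PElements X := fun i => (h i.out).choose with ht
  have ht1 : ∀ i : I, Zigzag i.out (t i) := fun i => (h i.out).choose_spec.1
  have ht2 : ∀ (i : I) (e' : PElements X), Zigzag e' (t i) → ∃! _ : e' ⟶ t i, True :=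
    fun i => (h i.out).choose_spec.2
  -- if `e` is zigzag-related to `t i`, then `e` lies in component `i`
  have hmk : ∀ (e : PElements X) (i : I), Zigzag e (t i) → Quotient.mk S e = i := by
    intro e i hz
    have hzz : Zigzag e i.out := hz.trans (ht1 i).symm
    conv_rhs => rw [← Quotient.out_eq i]
    exact Quotient.sound hzz
  have hz0 : ∀ e : PElements X, Zigzag e (t (Quotient.mk S e)) := by
    intro e
    have h1 : Zigzag (Quotient.mk S e).out e := Quotient.mk_out (s := S) e
    exact h1.symm.trans (ht1 _)
  set Γ : I → C := fun i => (t i).ctx with hΓ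
  refine ⟨I, Γ, ?_⟩
  set F : Discrete I ⥤ Cᵒᵖ ⥤ Type := Discrete.functor (fun i => yoneda.obj (Γ i)) with hF
  set c : Cofan (fun i => yoneda.obj (Γ i)) :=
    Cofan.mk X (fun i => yonedaEquiv.symm (t i).elt) with hc
  have happ : ∀ (i : I) (k : Cᵒᵖ) (σ : (yoneda.obj (Γ i)).obj k),
      (c.ι.app ⟨i⟩).app k σ = X.map σ.op (t i).elt := by
    intro i k σ
    exact yonedaEquiv_symm_app_apply (t i).elt k σ
  have hcolim : IsColimit c := by
    apply evaluationJointlyReflectsColimits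
    intro k
    apply Nonempty.some
    rw [Types.isColimit_iff_coconeTypesIsColimit]
    refine ⟨?_⟩
    constructor
    · -- injectivity
      intro a b hab
      obtain ⟨⟨i⟩, σ, rfl⟩ := Functor.ιColimitType_jointly_surjective _ a
      obtain ⟨⟨j⟩, τ, rfl⟩ := Functor.ιColimitType_jointly_surjective _ b
      have heq : X.map σ.op (t i).elt = X.map τ.op (t j).elt := by
        have := hab
        simp [Functor.descColimitType_ιColimitType_apply, happ] at this; exact this
      set e : PElements X := ⟨k.unop, X.map σ.op (t i).elt⟩ with he
      let mσ : e ⟶ t i := ⟨σ, rfl⟩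
      let mτ : e ⟶ t j := ⟨τ, heq.symm⟩
      have hij : i = j := by
        rw [← hmk e i (Zigzag.of_hom mσ), ← hmk e j (Zigzag.of_hom mτ)]
      subst hij
      have huniq := ht2 i e (Zigzag.of_hom mσ)
      have : mσ = mτ := huniq.unique trivial trivial
      have hστ : σ = τ := congrArg Subtype.val this
      subst hστ
      rfl
    · -- surjectivity
      intro x
      set e : PElements X := ⟨k.unop, x⟩ with he
      set i := Quotient.mk S e with hi
      obtain ⟨u, -⟩ := (ht2 i e (hz0 e)).exists
      refine ⟨Functor.ιColimitType _ ⟨i⟩ u.1, ?_⟩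
      rw [Functor.descColimitType_ιColimitType_apply]
      have := u.2
      simp [happ] at this; exact this
  exact ⟨(hcolim.coconePointUniqueUpToIso (colimit.isColimit F))⟩
end

section
/- (Strengthening.) Let L be a first-order language, α a type of flexible variables, β a type of rigid variables. For a substitution σ : α → L.Term γ, let σ⁺ : α ⊕ β → L.Term (γ ⊕ β) be defined by σ⁺ (Sum.inl a) = (σ a).relabel Sum.inl and σ⁺ (Sum.inr b) = var (Sum.inr b). Let s : L.Term α and t : L.Term (α ⊕ β). If there exist a type γ and a substitution σ : α → L.Term γ with (s.relabel Sum.inl).subst σ⁺ = t.subst σ⁺, then t mentions no rigid variables: there exists a (necessarily unique) term t' : L.Term α with t = t'.relabel Sum.inl. -/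
open FirstOrder FirstOrder.Language

/-- The lift `σ⁺` of a substitution `σ` on the flexible variables `α` to a substitution on a
unification context `α ⊕ β`, acting as the identity on the rigid variables `β`. -/
def liftSubst {L : Language} {α : Type u} {β : Type u'} {γ : Type v}
    (σ : α → L.Term γ) : α ⊕ β → L.Term (γ ⊕ β) :=
  Sum.elim (fun a => (σ a).relabel Sum.inl) (fun b => Term.var (Sum.inr b))

lemma relabel_inj {L : Language} {α : Type u} {β : Type u'} {f : α → β}
    (hf : Function.Injective f) : Function.Injective (Term.relabel f : L.Term α → L.Term β) := by
  intro t₁ t₂ h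
  induction t₁ generalizing t₂ with
  | var a => cases t₂ with
    | var b => simp only [Term.relabel, Term.var.injEq] at h ⊢; exact hf h
    | func g ts => simp [Term.relabel] at h
  | func g ts ih =>
    cases t₂ with
    | var b => simp [Term.relabel] at h
    | func g' ts' =>
      simp only [Term.relabel, Term.func.injEq] at h
      obtain ⟨rfl, hg, hts⟩ := h
      rw [heq_eq_eq] at hg hts
      subst hg
      simp only [Term.func.injEq, heq_eq_eq, true_and]
      funext i
      exact ih i (congrFun hts i)

lemma subst_relabel {L : Language} {α : Type u} {β : Type u'} {γ : Type v}
    (t : L.Term α) (f : α → β) (σ : β → L.Term γ) :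
    (t.relabel f).subst σ = t.subst (σ ∘ f) := by
  induction t with
  | var a => rfl
  | func g ts ih => simp only [Term.relabel, Term.subst, Term.func.injEq, heq_eq_eq, true_and]
                    funext i; exact ih i

lemma relabel_subst {L : Language} {α : Type u} {β : Type u'} {γ : Type v}
    (t : L.Term α) (σ : α → L.Term β) (f : β → γ) :
    (t.subst σ).relabel f = t.subst (fun a => (σ a).relabel f) := by
  induction t with
  | var a => rfl
  | func g ts ih => simp only [Term.relabel, Term.subst, Term.func.injEq, heq_eq_eq, true_and]
                    funext i; exact ih i

lemma noRigid {L : Language} {α : Type u} {β : Type u'} {γ : Type v}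
    (σ : α → L.Term γ) :
    ∀ (t : L.Term (α ⊕ β)) (u : L.Term γ),
      t.subst (liftSubst σ) = u.relabel Sum.inl →
      ∃ t' : L.Term α, t = t'.relabel Sum.inl := by
  intro t
  induction t with
  | var a =>
    intro u h
    cases a with
    | inl a => exact ⟨Term.var a, rfl⟩
    | inr b =>
      exfalso
      cases u with
      | var c => simp [Term.subst, liftSubst, Term.relabel] at h
      | func g ts => simp [Term.subst, liftSubst, Term.relabel] at h
  | func g ts ih =>
    intro u h
    cases u with
    | var c =>
      exfalso
      simp [Term.subst, Term.relabel] at h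
    | func g' ts' =>
      simp only [Term.subst, Term.relabel, Term.func.injEq] at h
      obtain ⟨rfl, hg, hts⟩ := h
      rw [heq_eq_eq] at hg hts
      subst hg
      have : ∀ i, ∃ t' : L.Term α, ts i = t'.relabel Sum.inl := fun i =>
        ih i (ts' i) (congrFun hts i)
      choose ts'' hts'' using this
      exact ⟨Term.func g ts'', by
        simp only [Term.relabel, Term.func.injEq, heq_eq_eq, true_and]
        funext i; exact hts'' i⟩

/-- Strengthening: if a term `s` depending only on the flexible variables is unifiable (by a
substitution acting only on the flexible variables) with a term `t` of the unification
context, then `t` mentions no rigid variables, i.e. `t` is (uniquely) the relabelling of a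
term `t'` on the flexible variables. -/
theorem strengthening {L : Language} {α : Type u} {β : Type u'}
    (s : L.Term α) (t : L.Term (α ⊕ β))
    (h : ∃ (γ : Type v) (σ : α → L.Term γ),
      (s.relabel Sum.inl).subst (liftSubst σ) = t.subst (liftSubst σ)) :
    ∃! t' : L.Term α, t = t'.relabel Sum.inl := by
  obtain ⟨γ, σ, h⟩ := h
  have hl : (s.relabel (Sum.inl : α → α ⊕ β)).subst (liftSubst σ)
      = (s.subst σ).relabel Sum.inl := by
    rw [subst_relabel, relabel_subst]; rfl
  obtain ⟨t', ht'⟩ := noRigid σ t (s.subst σ) (h.symm.trans hl)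
  exact ⟨t', ht', fun y hy => relabel_inj Sum.inl_injective (ht' ▸ hy).symm⟩
end

section
/- (First-order unification.) Let L be a first-order language and α a type of variables. Let t₁, t₂ : L.Term α be terms that are unifiable: there exist a type β and a substitution σ : α → L.Term β with t₁.subst σ = t₂.subst σ. Then t₁ and t₂ admit a most general unifier: there exists a substitution σ₀ : α → L.Term α with t₁.subst σ₀ = t₂.subst σ₀, such that for every type β and every unifier σ : α → L.Term β of t₁ and t₂ there exists τ : α → L.Term β with σ a = (σ₀ a).subst τ for all a : α. -/
open FirstOrder FirstOrder.Language

namespace Unif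
variable {L : Language} {α : Type u} {β : Type v} {γ : Type*}

/-- Size of a term. -/
def tsize : L.Term α → ℕ
  | .var _ => 1
  | .func _ ts => 1 + ∑ i, tsize (ts i)

theorem tsize_pos (t : L.Term α) : 0 < tsize t := by
  cases t <;> simp [tsize]

theorem subst_subst (t : L.Term α) (σ : α → L.Term β) (τ : β → L.Term γ) :
    (t.subst σ).subst τ = t.subst (fun a => (σ a).subst τ) := by
  induction t with
  | var a => rfl
  | func f ts ih => simp [Term.subst, ih]

theorem subst_var (t : L.Term α) : t.subst Term.var = t := by
  induction t with
  | var a => rfl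
  | func f ts ih => simp [Term.subst, ih]

theorem subst_relabel (t : L.Term α) (g : α → β) :
    t.subst (fun a => Term.var (g a)) = t.relabel g := by
  induction t with
  | var a => rfl
  | func f ts ih => simp [Term.subst, Term.relabel, ih]

theorem relabel_subst (t : L.Term α) (σ : α → L.Term β) (g : β → γ) :
    (t.subst σ).relabel g = t.subst (fun a => (σ a).relabel g) := by
  induction t with
  | var a => rfl
  | func f ts ih => simp [Term.subst, Term.relabel, ih]

theorem subst_congr [DecidableEq α] {t : L.Term α} {σ σ' : α → L.Term β}
    (h : ∀ a ∈ t.varFinset, σ a = σ' a) : t.subst σ = t.subst σ' := by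
  induction t with
  | var a => exact h a (by simp [Term.varFinset])
  | func f ts ih =>
    simp only [Term.subst]
    congr 1
    funext i
    refine ih i fun a ha => h a ?_
    simp only [Term.varFinset, Finset.mem_biUnion, Finset.mem_univ, true_and]
    exact ⟨i, ha⟩

theorem le_tsize_subst [DecidableEq α] {x : α} {t : L.Term α} (hx : x ∈ t.varFinset)
    (σ : α → L.Term β) : tsize (σ x) ≤ tsize (t.subst σ) := by
  induction t with
  | var a => simp [Term.varFinset] at hx; subst hx; simp [Term.subst]
  | func f ts ih =>
    simp only [Term.varFinset, Finset.mem_biUnion, Finset.mem_univ, true_and] at hx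
    obtain ⟨i, hi⟩ := hx
    calc tsize (σ x) ≤ tsize ((ts i).subst σ) := ih i hi
      _ ≤ ∑ j, tsize ((ts j).subst σ) :=
        Finset.single_le_sum (f := fun j => tsize ((ts j).subst σ))
          (fun j _ => Nat.zero_le _) (Finset.mem_univ i)
      _ ≤ tsize ((Term.func f ts).subst σ) := by simp [Term.subst, tsize]

theorem lt_tsize_subst [DecidableEq α] {x : α} {t : L.Term α} (hx : x ∈ t.varFinset)
    (ht : t ≠ Term.var x) (σ : α → L.Term β) : tsize (σ x) < tsize (t.subst σ) := by
  cases t with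
  | var a => simp [Term.varFinset] at hx; subst hx; exact absurd rfl ht
  | func f ts =>
    simp only [Term.varFinset, Finset.mem_biUnion, Finset.mem_univ, true_and] at hx
    obtain ⟨i, hi⟩ := hx
    calc tsize (σ x) ≤ tsize ((ts i).subst σ) := le_tsize_subst hi σ
      _ ≤ ∑ j, tsize ((ts j).subst σ) :=
        Finset.single_le_sum (f := fun j => tsize ((ts j).subst σ))
          (fun j _ => Nat.zero_le _) (Finset.mem_univ i)
      _ < tsize ((Term.func f ts).subst σ) := by simp [Term.subst, tsize]

theorem varFinset_subst_subset [DecidableEq α] (t : L.Term α) (σ : α → L.Term α) :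
    (t.subst σ).varFinset ⊆ t.varFinset.biUnion fun a => (σ a).varFinset := by
  induction t with
  | var a => simp [Term.subst, Term.varFinset]
  | func f ts ih =>
    simp only [Term.subst, Term.varFinset]
    intro b hb
    simp only [Finset.mem_biUnion, Finset.mem_univ, true_and] at hb
    obtain ⟨i, hi⟩ := hb
    have := ih i hi
    simp only [Finset.mem_biUnion] at this ⊢
    obtain ⟨a, ha, hb⟩ := this
    exact ⟨a, by simp only [Finset.mem_biUnion, Finset.mem_univ, true_and]; exact ⟨i, ha⟩, hb⟩

def Unifies (σ : α → L.Term β) (E : List (L.Term α × L.Term α)) : Prop :=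
  ∀ p ∈ E, p.1.subst σ = p.2.subst σ

def evars [DecidableEq α] : List (L.Term α × L.Term α) → Finset α
  | [] => ∅
  | p :: E => p.1.varFinset ∪ p.2.varFinset ∪ evars E

def esize : List (L.Term α × L.Term α) → ℕ
  | [] => 0
  | p :: E => tsize p.1 + tsize p.2 + esize E

theorem mem_evars [DecidableEq α] {a : α} {E : List (L.Term α × L.Term α)} :
    a ∈ evars E ↔ ∃ p ∈ E, a ∈ p.1.varFinset ∨ a ∈ p.2.varFinset := by
  induction E with
  | nil => simp [evars]
  | cons p E ih => simp [evars, ih, Finset.mem_union, or_assoc]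

theorem esize_eq (E : List (L.Term α × L.Term α)) :
    esize E = (E.map fun p => tsize p.1 + tsize p.2).sum := by
  induction E with
  | nil => rfl
  | cons p E ih => simp [esize, ih]

/-- The single-variable substitution. -/
def theta [DecidableEq α] (x : α) (w : L.Term α) : α → L.Term α :=
  fun a => if a = x then w else Term.var a

theorem theta_comp [DecidableEq α] {x : α} {w : L.Term α} {σ : α → L.Term γ}
    (hσx : σ x = w.subst σ) : (fun a => (theta x w a).subst σ) = σ := by
  funext a
  by_cases ha : a = x
  · subst ha; simp [theta, hσx]
  · simp [theta, ha, Term.subst]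

theorem unifies_map_theta [DecidableEq α] {x : α} {w : L.Term α} {σ : α → L.Term γ}
    (hσx : σ x = w.subst σ) {E : List (L.Term α × L.Term α)} (hσ : Unifies σ E) :
    Unifies σ (E.map fun p => (p.1.subst (theta x w), p.2.subst (theta x w))) := by
  intro p hp
  simp only [List.mem_map] at hp
  obtain ⟨q, hq, rfl⟩ := hp
  simpa [subst_subst, theta_comp hσx] using hσ q hq

theorem unifier_head [DecidableEq α] {x : α} {w : L.Term α} {E : List (L.Term α × L.Term α)}
    (hmem : (Term.var x, w) ∈ E ∨ (w, Term.var x) ∈ E)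
    {σ : α → L.Term γ} (hσ : Unifies σ E) : σ x = w.subst σ := by
  rcases hmem with hmem | hmem
  · exact hσ _ hmem
  · exact (hσ _ hmem).symm

theorem evars_map_theta [DecidableEq α] {x : α} {w : L.Term α}
    (hx : x ∉ w.varFinset) {E : List (L.Term α × L.Term α)}
    (hw : w.varFinset ⊆ evars E) :
    evars (E.map fun p => (p.1.subst (theta x w), p.2.subst (theta x w))) ⊆
      (evars E).erase x := by
  intro a ha
  rw [mem_evars] at ha
  obtain ⟨p, hp, ha⟩ := ha
  simp only [List.mem_map] at hp
  obtain ⟨q, hq, rfl⟩ := hp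
  have key : ∀ t : L.Term α, (t.varFinset ⊆ evars E) → a ∈ (t.subst (theta x w)).varFinset →
      a ∈ (evars E).erase x := by
    intro t htE hat
    have := varFinset_subst_subset t (theta x w) hat
    simp only [Finset.mem_biUnion] at this
    obtain ⟨b, hb, hab⟩ := this
    by_cases hbx : b = x
    · subst hbx
      simp only [theta, if_pos rfl] at hab
      exact Finset.mem_erase.2 ⟨fun h => hx (h ▸ hab), hw hab⟩
    · simp only [theta, if_neg hbx, Term.varFinset, Finset.mem_singleton] at hab
      subst hab
      exact Finset.mem_erase.2 ⟨hbx, htE hb⟩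
  have hq1 : (q.1).varFinset ⊆ evars E := fun b hb => mem_evars.2 ⟨q, hq, Or.inl hb⟩
  have hq2 : (q.2).varFinset ⊆ evars E := fun b hb => mem_evars.2 ⟨q, hq, Or.inr hb⟩
  rcases ha with ha | ha
  · exact key q.1 hq1 ha
  · exact key q.2 hq2 ha

/-- The elimination step: from an mgu of the substituted system, get an mgu of the original. -/
theorem elim_mgu [DecidableEq α] {x : α} {w : L.Term α} {E : List (L.Term α × L.Term α)}
    (hmem : (Term.var x, w) ∈ E ∨ (w, Term.var x) ∈ E)
    {ρ₀ : α → L.Term α}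
    (hρ : Unifies ρ₀ (E.map fun p => (p.1.subst (theta x w), p.2.subst (theta x w))))
    (hρmgu : ∀ (β : Type w) (σ : α → L.Term β),
      Unifies σ (E.map fun p => (p.1.subst (theta x w), p.2.subst (theta x w))) →
      ∃ τ : α → L.Term β, ∀ a, σ a = (ρ₀ a).subst τ) :
    ∃ σ₀ : α → L.Term α, Unifies σ₀ E ∧
      ∀ (β : Type w) (σ : α → L.Term β), Unifies σ E →
        ∃ τ : α → L.Term β, ∀ a, σ a = (σ₀ a).subst τ := by
  refine ⟨fun a => (theta x w a).subst ρ₀, ?_, ?_⟩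
  · intro p hp
    rw [← subst_subst, ← subst_subst]
    exact hρ _ (List.mem_map.2 ⟨p, hp, rfl⟩)
  · intro β σ hσ
    have hσx : σ x = w.subst σ := unifier_head hmem hσ
    obtain ⟨τ, hτ⟩ := hρmgu β σ (unifies_map_theta hσx hσ)
    refine ⟨τ, fun a => ?_⟩
    rw [subst_subst]
    have : (fun b => (ρ₀ b).subst τ) = σ := by funext b; exact (hτ b).symm
    rw [this]
    by_cases ha : a = x
    · subst ha; simp [theta, hσx]
    · simp [theta, ha, Term.subst]

end Unif

namespace Unif
variable {L : Language} {α : Type u} {β : Type v} {γ : Type*}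

theorem unifies_decompose {l : ℕ} {f : L.Functions l} {ts us : Fin l → L.Term α}
    {E' : List (L.Term α × L.Term α)} (σ : α → L.Term γ) :
    Unifies σ ((Term.func f ts, Term.func f us) :: E') ↔
      Unifies σ ((List.ofFn fun i => (ts i, us i)) ++ E') := by
  constructor
  · intro hσ p hp
    rcases List.mem_append.1 hp with hp | hp
    · obtain ⟨i, rfl⟩ := List.mem_ofFn.1 hp
      have h0 := hσ _ (List.mem_cons_self)
      simp only [Term.subst, Term.func.injEq, heq_eq_eq, true_and] at h0
      exact congrFun h0 i
    · exact hσ p (List.mem_cons_of_mem _ hp)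
  · intro hσ p hp
    rcases List.mem_cons.1 hp with rfl | hp
    · simp only [Term.subst]
      congr 1
      funext i
      exact hσ _ (List.mem_append_left _ (List.mem_ofFn.2 ⟨i, rfl⟩))
    · exact hσ p (List.mem_append_right _ hp)

theorem evars_decompose [DecidableEq α] {l : ℕ} {f g : L.Functions l}
    {ts us : Fin l → L.Term α} {E' : List (L.Term α × L.Term α)} :
    evars ((List.ofFn fun i => (ts i, us i)) ++ E') ⊆
      evars ((Term.func f ts, Term.func g us) :: E') := by
  intro a ha
  rw [mem_evars] at ha ⊢
  obtain ⟨p, hp, hap⟩ := ha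
  rcases List.mem_append.1 hp with hp | hp
  · obtain ⟨i, rfl⟩ := List.mem_ofFn.1 hp
    refine ⟨_, List.mem_cons_self, ?_⟩
    rcases hap with h | h
    · left
      simp only [Term.varFinset, Finset.mem_biUnion, Finset.mem_univ, true_and]
      exact ⟨i, h⟩
    · right
      simp only [Term.varFinset, Finset.mem_biUnion, Finset.mem_univ, true_and]
      exact ⟨i, h⟩
  · exact ⟨p, List.mem_cons_of_mem _ hp, hap⟩

theorem esize_append (A B : List (L.Term α × L.Term α)) :
    esize (A ++ B) = esize A + esize B := by
  induction A with
  | nil => simp [esize]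
  | cons p A ih => simp [esize, ih]; omega

theorem esize_decompose {l : ℕ} {ts us : Fin l → L.Term α}
    {f g : L.Functions l} {E' : List (L.Term α × L.Term α)} :
    esize ((List.ofFn fun i => (ts i, us i)) ++ E') <
      esize ((Term.func f ts, Term.func g us) :: E') := by
  rw [esize_append, esize_eq]
  simp only [List.map_ofFn, List.sum_ofFn, Function.comp, esize, tsize]
  rw [Finset.sum_add_distrib]
  omega

theorem lex_helper {a b c d : ℕ} (h1 : a ≤ c) (h2 : a < c ∨ b < d) :
    Prod.Lex (· < ·) (· < ·) (a, b) (c, d) := by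
  rcases lt_or_eq_of_le h1 with h | rfl
  · exact Prod.Lex.left _ _ h
  · rcases h2 with h | h
    · exact absurd h (lt_irrefl _)
    · exact Prod.Lex.right _ h

theorem listMGU [DecidableEq α] :
    ∀ E : List (L.Term α × L.Term α), (∃ σ : α → L.Term α, Unifies σ E) →
    ∃ σ₀ : α → L.Term α, Unifies σ₀ E ∧
      ∀ (β : Type w) (σ : α → L.Term β), Unifies σ E →
        ∃ τ : α → L.Term β, ∀ a, σ a = (σ₀ a).subst τ
  | [], _ =>
    ⟨Term.var, fun p hp => absurd hp List.not_mem_nil, fun β σ _ => ⟨σ, fun a => rfl⟩⟩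
  | (t, u) :: E', h => by
    obtain ⟨σα, hσα⟩ := h
    by_cases htu : t = u
    · -- delete
      have hsub : evars E' ⊆ evars ((t, u) :: E') := fun a ha => by
        rw [mem_evars] at ha ⊢; obtain ⟨p, hp, h⟩ := ha; exact ⟨p, List.mem_cons_of_mem _ hp, h⟩
      have hsz : esize E' < esize ((t, u) :: E') := by
        have := tsize_pos (L := L) (α := α) t
        simp [esize]; omega
      have hcard := Finset.card_le_card hsub
      obtain ⟨σ₀, hσ₀, hmgu⟩ := listMGU E' ⟨σα, fun p hp => hσα p (List.mem_cons_of_mem _ hp)⟩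
      refine ⟨σ₀, ?_, ?_⟩
      · intro p hp
        rcases List.mem_cons.1 hp with rfl | hp
        · rw [htu]
        · exact hσ₀ p hp
      · intro β σ hσ
        exact hmgu β σ (fun p hp => hσ p (List.mem_cons_of_mem _ hp))
    · have elim : ∀ (x : α) (v : L.Term α),
          ((Term.var x, v) ∈ ((t, u) :: E') ∨ (v, Term.var x) ∈ ((t, u) :: E')) →
          v ≠ Term.var x →
          (evars (((t, u) :: E').map fun p =>
              (p.1.subst (theta x v), p.2.subst (theta x v)))).card <
            (evars ((t, u) :: E')).card →
          x ∉ v.varFinset →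
          ∃ σ₀ : α → L.Term α, Unifies σ₀ ((t, u) :: E') ∧
            ∀ (β : Type w) (σ : α → L.Term β), Unifies σ ((t, u) :: E') →
              ∃ τ : α → L.Term β, ∀ a, σ a = (σ₀ a).subst τ := by
        intro x v hmem hvx hcard hocc
        have hx : σα x = v.subst σα := unifier_head hmem hσα
        obtain ⟨ρ₀, hρ, hρmgu⟩ := listMGU
          (((t, u) :: E').map fun p => (p.1.subst (theta x v), p.2.subst (theta x v)))
          ⟨σα, unifies_map_theta hx hσα⟩
        exact elim_mgu hmem hρ hρmgu
      have hcardgen : ∀ (x : α) (v : L.Term α),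
          ((Term.var x, v) ∈ ((t, u) :: E') ∨ (v, Term.var x) ∈ ((t, u) :: E')) →
          x ∉ v.varFinset →
          (evars (((t, u) :: E').map fun p =>
              (p.1.subst (theta x v), p.2.subst (theta x v)))).card <
            (evars ((t, u) :: E')).card := by
        intro x v hmem hocc
        have hw : v.varFinset ⊆ evars ((t, u) :: E') := by
          intro a ha
          rw [mem_evars]
          rcases hmem with hmem | hmem
          · exact ⟨_, hmem, Or.inr ha⟩
          · exact ⟨_, hmem, Or.inl ha⟩
        have hxE : x ∈ evars ((t, u) :: E') := by
          rw [mem_evars]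
          rcases hmem with hmem | hmem
          · exact ⟨_, hmem, Or.inl (by simp [Term.varFinset])⟩
          · exact ⟨_, hmem, Or.inr (by simp [Term.varFinset])⟩
        calc (evars _).card ≤ ((evars ((t, u) :: E')).erase x).card :=
              Finset.card_le_card (evars_map_theta hocc hw)
          _ < _ := Finset.card_erase_lt_of_mem hxE
      have decomp : ∀ {l : ℕ} (f : L.Functions l) (ts us : Fin l → L.Term α),
          t = Term.func f ts → u = Term.func f us →
          ∃ σ₀ : α → L.Term α, Unifies σ₀ ((t, u) :: E') ∧
            ∀ (β : Type w) (σ : α → L.Term β), Unifies σ ((t, u) :: E') →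
              ∃ τ : α → L.Term β, ∀ a, σ a = (σ₀ a).subst τ := by
        intro l f ts us ht hu
        have hcard : (evars ((List.ofFn fun i => (ts i, us i)) ++ E')).card ≤
            (evars ((t, u) :: E')).card := by
          rw [ht, hu]
          exact Finset.card_le_card (evars_decompose (f := f) (g := f))
        have hsz : esize ((List.ofFn fun i => (ts i, us i)) ++ E') <
            esize ((t, u) :: E') := by
          rw [ht, hu]
          exact esize_decompose (f := f) (g := f)
        obtain ⟨σ₀, hσ₀, hmgu⟩ := listMGU ((List.ofFn fun i => (ts i, us i)) ++ E')
          ⟨σα, by rw [ht, hu] at hσα; exact (unifies_decompose σα).1 hσα⟩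
        refine ⟨σ₀, ?_, fun β σ hσ => hmgu β σ ?_⟩
        · rw [ht, hu]
          exact (unifies_decompose σ₀).2 hσ₀
        · rw [ht, hu] at hσ
          exact (unifies_decompose σ).1 hσ
      cases t with
      | var x =>
        by_cases hocc : x ∈ u.varFinset
        · exfalso
          have hx : σα x = u.subst σα := hσα _ (List.mem_cons_self)
          have := lt_tsize_subst hocc (fun h => htu h.symm) σα
          rw [← hx] at this
          exact lt_irrefl _ this
        · exact elim x u (Or.inl (List.mem_cons_self)) (fun h => htu h.symm)
            (hcardgen x u (Or.inl (List.mem_cons_self)) hocc) hocc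
      | func f ts =>
        cases u with
        | var x =>
          by_cases hocc : x ∈ (Term.func f ts).varFinset
          · exfalso
            have hx : σα x = (Term.func f ts).subst σα := (hσα _ (List.mem_cons_self)).symm
            have := lt_tsize_subst hocc (fun h => by cases h) σα
            rw [← hx] at this
            exact lt_irrefl _ this
          · exact elim x (Term.func f ts) (Or.inr (List.mem_cons_self))
              (fun h => by cases h)
              (hcardgen x (Term.func f ts) (Or.inr (List.mem_cons_self)) hocc) hocc
        | func g us =>
          -- decompose
          have h0 := hσα _ (List.mem_cons_self)
          simp only [Term.subst] at h0
          injection h0 with h1 h2 h3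
          subst h1
          have hf : f = g := eq_of_heq h2
          subst hf
          exact decomp f ts us rfl rfl
termination_by E => ((evars E).card, esize E)
decreasing_by
  · exact lex_helper hcard (Or.inr hsz)
  · exact lex_helper (le_of_lt hcard) (Or.inl hcard)
  · exact lex_helper hcard (Or.inr hsz)


end Unif

namespace Unif
variable {L : Language} {α : Type u} {β : Type v} {γ : Type*}

theorem relabel_inj {g : α → β} (hg : Function.Injective g) :
    ∀ {t₁ t₂ : L.Term α}, t₁.relabel g = t₂.relabel g → t₁ = t₂ := by
  intro t₁
  induction t₁ with
  | var a =>
    intro t₂ h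
    cases t₂ with
    | var b =>
      simp only [Term.relabel, Term.var.injEq] at h
      rw [hg h]
    | func f ts => simp only [Term.relabel] at h; cases h
  | func f ts ih =>
    intro t₂ h
    cases t₂ with
    | var b => simp only [Term.relabel] at h; cases h
    | func g' us =>
      simp only [Term.relabel] at h
      injection h with h1 h2 h3
      subst h1
      rw [eq_of_heq h2] at *
      have h3' := eq_of_heq h3
      congr 1
      funext i
      exact ih i (congrFun h3' i)

end Unif

/-- First-order unification: any two unifiable terms admit a most general unifier. -/
theorem exists_mostGeneralUnifier {L : Language} {α : Type u}
    (t₁ t₂ : L.Term α)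
    (h : ∃ (β : Type v) (σ : α → L.Term β), t₁.subst σ = t₂.subst σ) :
    ∃ σ₀ : α → L.Term α, t₁.subst σ₀ = t₂.subst σ₀ ∧
      ∀ (β : Type w) (σ : α → L.Term β), t₁.subst σ = t₂.subst σ →
        ∃ τ : α → L.Term β, ∀ a : α, σ a = (σ₀ a).subst τ := by
  classical
  obtain ⟨β', σ', hσ'⟩ := h
  by_cases hne : Nonempty α
  · obtain ⟨a0⟩ := hne
    have hα : Unif.Unifies (fun a => (σ' a).relabel (fun _ => a0)) [(t₁, t₂)] := by
      intro p hp
      rw [List.mem_singleton] at hp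
      subst hp
      show t₁.subst _ = t₂.subst _
      rw [← Unif.relabel_subst, ← Unif.relabel_subst, hσ']
    obtain ⟨σ₀, hσ₀, hmgu⟩ := Unif.listMGU [(t₁, t₂)] ⟨_, hα⟩
    refine ⟨σ₀, hσ₀ _ (List.mem_singleton.2 rfl), fun β σ hσ => ?_⟩
    refine hmgu β σ fun p hp => ?_
    rw [List.mem_singleton] at hp
    subst hp
    exact hσ
  · have : IsEmpty α := not_nonempty_iff.mp hne
    have ht : t₁ = t₂ := by
      have hσe : σ' = fun a => Term.var (isEmptyElim a : β') := by
        funext a; exact isEmptyElim a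
      rw [hσe, Unif.subst_relabel, Unif.subst_relabel] at hσ'
      exact Unif.relabel_inj (fun a => isEmptyElim a) hσ'
    subst ht
    exact ⟨Term.var, rfl, fun β σ _ => ⟨σ, fun a => rfl⟩⟩
end

section
/- (Flex-rigid first-order unification.) Let L be a first-order language, α a type of flexible variables, β a type of rigid variables. For a substitution σ : α → L.Term γ, let σ⁺ : α ⊕ β → L.Term (γ ⊕ β) be defined by σ⁺ (Sum.inl a) = (σ a).relabel Sum.inl and σ⁺ (Sum.inr b) = var (Sum.inr b); a flexible unifier of t₁, t₂ : L.Term (α ⊕ β) is a substitution σ : α → L.Term γ with t₁.subst σ⁺ = t₂.subst σ⁺. If t₁ and t₂ admit a flexible unifier (for some γ), then they admit a most general flexible unifier: there exist a type δ and ρ : α → L.Term δ with t₁.subst ρ⁺ = t₂.subst ρ⁺, such that for every type γ and every flexible unifier σ : α → L.Term γ of t₁ and t₂ there exists τ : δ → L.Term γ with σ a = (ρ a).subst τ for all a : α. -/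
open FirstOrder FirstOrder.Language

universe w

namespace FlexRigidAux

variable {L : Language} {α β γ : Type*}

/-- The size of a term. -/
def tsize : L.Term α → ℕ
  | .var _ => 1
  | .func _ ts => 1 + ∑ i, tsize (ts i)

/-- The set of variables of a term. -/
def tvars : L.Term α → Set α
  | .var a => {a}
  | .func _ ts => ⋃ i, tvars (ts i)

theorem tvars_finite (t : L.Term α) : (tvars t).Finite := by
  induction t with
  | var a => exact Set.finite_singleton a
  | func f ts ih => exact Set.finite_iUnion ih

theorem subst_subst (t : L.Term α) (σ : α → L.Term β) (τ : β → L.Term γ) :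
    (t.subst σ).subst τ = t.subst fun a => (σ a).subst τ := by
  induction t with
  | var a => rfl
  | func f ts ih => simp only [Term.subst, ih]

theorem subst_congr {t : L.Term α} {σ τ : α → L.Term β}
    (h : ∀ a ∈ tvars t, σ a = τ a) : t.subst σ = t.subst τ := by
  induction t with
  | var a => exact h a rfl
  | func f ts ih =>
    simp only [Term.subst]
    congr 1
    funext i
    exact ih i fun a ha => h a (Set.mem_iUnion.2 ⟨i, ha⟩)

theorem subst_var (t : L.Term α) : t.subst Term.var = t := by
  induction t with
  | var a => rfl
  | func f ts ih => simp only [Term.subst, ih]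

theorem tvars_subst (t : L.Term α) (σ : α → L.Term β) :
    tvars (t.subst σ) = ⋃ a ∈ tvars t, tvars (σ a) := by
  induction t with
  | var a => simp [Term.subst, tvars]
  | func f ts ih =>
    simp only [Term.subst, tvars, ih]
    rw [Set.biUnion_iUnion]

theorem tvars_relabel (t : L.Term α) (f : α → β) :
    tvars (t.relabel f) = f '' tvars t := by
  induction t with
  | var a => simp [tvars]
  | func g ts ih =>
    simp only [Term.relabel, tvars, ih, Set.image_iUnion]

theorem tsize_subst_le {t : L.Term α} {a : α} (ha : a ∈ tvars t) (σ : α → L.Term β) :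
    tsize (σ a) ≤ tsize (t.subst σ) := by
  induction t with
  | var b => obtain rfl : a = b := ha; exact le_rfl
  | func f ts ih =>
    obtain ⟨i, hi⟩ := Set.mem_iUnion.1 ha
    calc tsize (σ a) ≤ tsize ((ts i).subst σ) := ih i hi
      _ ≤ ∑ j, tsize ((ts j).subst σ) :=
        Finset.single_le_sum (f := fun j => tsize ((ts j).subst σ)) (fun j _ => Nat.zero_le _) (Finset.mem_univ i)
      _ ≤ 1 + ∑ j, tsize ((ts j).subst σ) := Nat.le_add_left _ _
      _ = tsize ((Term.func f ts).subst σ) := rfl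

theorem tsize_subst_lt {l : ℕ} {f : L.Functions l} {ts : Fin l → L.Term α} {a : α}
    (ha : a ∈ tvars (Term.func f ts)) (σ : α → L.Term β) :
    tsize (σ a) < tsize ((Term.func f ts).subst σ) := by
  obtain ⟨i, hi⟩ := Set.mem_iUnion.1 ha
  calc tsize (σ a) ≤ tsize ((ts i).subst σ) := tsize_subst_le hi σ
    _ ≤ ∑ j, tsize ((ts j).subst σ) :=
      Finset.single_le_sum (f := fun j => tsize ((ts j).subst σ)) (fun j _ => Nat.zero_le _) (Finset.mem_univ i)
    _ < 1 + ∑ j, tsize ((ts j).subst σ) := Nat.lt_one_add_iff.2 le_rfl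
    _ = tsize ((Term.func f ts).subst σ) := rfl

theorem relabel_injective {f : α → β} (hf : Function.Injective f) :
    Function.Injective (Term.relabel f : L.Term α → L.Term β) := by
  intro t
  induction t with
  | var a =>
    intro s hs
    cases s with
    | var b =>
      simp only [Term.relabel] at hs
      injection hs with h
      rw [hf h]
    | func g ss => simp [Term.relabel] at hs
  | func g ts ih =>
    intro s hs
    cases s with
    | var b => simp [Term.relabel] at hs
    | func g' ss =>
      simp only [Term.relabel] at hs
      injection hs with h1 h2 h3
      subst h1
      rw [eq_of_heq h2]
      congr 1
      have h3' := eq_of_heq h3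
      funext i
      exact ih i (congrFun h3' i)

theorem exists_unrelabel {f : α → β} (t : L.Term β) (h : tvars t ⊆ Set.range f) :
    ∃ s : L.Term α, t = s.relabel f := by
  induction t with
  | var b =>
    obtain ⟨a, rfl⟩ := h rfl
    exact ⟨Term.var a, rfl⟩
  | func g ts ih =>
    have : ∀ i, ∃ s : L.Term α, ts i = s.relabel f := fun i =>
      ih i fun a ha => h (Set.mem_iUnion.2 ⟨i, ha⟩)
    choose ss hss using this
    exact ⟨Term.func g ss, by simp only [Term.relabel]; congr 1; funext i; exact hss i⟩

theorem subst_relabel (t : L.Term α) (f : α → β) (σ : β → L.Term γ) :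
    (t.relabel f).subst σ = t.subst (σ ∘ f) := by
  induction t with
  | var a => rfl
  | func g ts ih => simp only [Term.relabel, Term.subst, ih]

theorem relabel_subst (t : L.Term α) (σ : α → L.Term β) (f : β → γ) :
    (t.subst σ).relabel f = t.subst fun a => (σ a).relabel f := by
  induction t with
  | var a => rfl
  | func g ts ih => simp only [Term.relabel, Term.subst, ih]



variable {V : Type*}

/-- `θ` unifies every pair in the system `E`. -/
def Unifies {W : Type*} (θ : V → L.Term W) (E : List (L.Term V × L.Term V)) : Prop :=
  ∀ p ∈ E, p.1.subst θ = p.2.subst θ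

/-- The variables of a system. -/
def evars (E : List (L.Term V × L.Term V)) : Set V :=
  ⋃ p ∈ E, tvars p.1 ∪ tvars p.2

/-- The size of a system. -/
def esize (E : List (L.Term V × L.Term V)) : ℕ :=
  (E.map fun p => tsize p.1 + tsize p.2).sum

theorem evars_finite (E : List (L.Term V × L.Term V)) : (evars E).Finite := by
  apply Set.Finite.biUnion (List.finite_toSet E)
  exact fun p _ => (tvars_finite p.1).union (tvars_finite p.2)

theorem evars_cons (p : L.Term V × L.Term V) (E : List (L.Term V × L.Term V)) :
    evars (p :: E) = (tvars p.1 ∪ tvars p.2) ∪ evars E := by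
  simp [evars]

theorem esize_cons (p : L.Term V × L.Term V) (E : List (L.Term V × L.Term V)) :
    esize (p :: E) = tsize p.1 + tsize p.2 + esize E := by
  simp [esize]

theorem tsize_pos (t : L.Term V) : 0 < tsize t := by
  cases t <;> simp [tsize]

open scoped Classical in
/-- Substitution eliminating the single variable `v` in favour of `t`. -/
noncomputable def elimSubst (v : V) (t : L.Term V) : V → L.Term V :=
  fun w => if w = v then t else Term.var w

theorem elimSubst_same (v : V) (t : L.Term V) : elimSubst v t v = t := by
  simp [elimSubst]

theorem elimSubst_ne (v : V) (t : L.Term V) {w : V} (h : w ≠ v) :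
    elimSubst v t w = Term.var w := by
  simp [elimSubst, h]

theorem elimSubst_fixes {W : Type*} (v : V) (t : L.Term V) (θ : V → L.Term W)
    (h : θ v = t.subst θ) (w : V) : θ w = (elimSubst v t w).subst θ := by
  by_cases hw : w = v
  · subst hw; rw [elimSubst_same]; exact h
  · rw [elimSubst_ne _ _ hw]; rfl

theorem subst_elimSubst_self {v : V} {t : L.Term V} (hv : v ∉ tvars t) :
    t.subst (elimSubst v t) = t := by
  rw [subst_congr (τ := Term.var) fun a ha => elimSubst_ne v t (fun h => hv (h ▸ ha)),
    subst_var]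

theorem tvars_subst_elimSubst {v : V} {t : L.Term V} (hv : v ∉ tvars t) (s : L.Term V) :
    tvars (s.subst (elimSubst v t)) ⊆ (tvars s ∪ tvars t) \ {v} := by
  rw [tvars_subst]
  rintro w hw
  simp only [Set.mem_iUnion] at hw
  obtain ⟨a, ha, hw⟩ := hw
  by_cases hav : a = v
  · subst hav
    rw [elimSubst_same] at hw
    exact ⟨Or.inr hw, fun h => hv (h ▸ hw)⟩
  · rw [elimSubst_ne _ _ hav] at hw
    obtain rfl : w = a := hw
    exact ⟨Or.inl ha, hav⟩

/-- The conclusion: a most general unifier of the system `E` exists. -/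
def MGUconc (E : List (L.Term V × L.Term V)) : Prop :=
  ∃ ρ : V → L.Term V, Unifies ρ E ∧
    ∀ (W : Type w) (θ : V → L.Term W), Unifies θ E → ∀ v, θ v = (ρ v).subst θ


theorem unifies_swap {W : Type*} (θ : V → L.Term W) (a b : L.Term V)
    (E : List (L.Term V × L.Term V)) :
    Unifies θ ((a, b) :: E) ↔ Unifies θ ((b, a) :: E) := by
  constructor <;>
    · intro h p hp
      rcases List.mem_cons.1 hp with rfl | hp
      · exact (h _ List.mem_cons_self).symm
      · exact h p (List.mem_cons_of_mem _ hp)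

theorem evars_pair_comm (a b : L.Term V) (E : List (L.Term V × L.Term V)) :
    evars ((a, b) :: E) = evars ((b, a) :: E) := by
  rw [evars_cons, evars_cons, Set.union_comm (tvars (a, b).1)]

theorem esize_pair_comm (a b : L.Term V) (E : List (L.Term V × L.Term V)) :
    esize ((a, b) :: E) = esize ((b, a) :: E) := by
  rw [esize_cons, esize_cons, Nat.add_comm (tsize (a, b).1)]

theorem evars_append (A B : List (L.Term V × L.Term V)) :
    evars (A ++ B) = evars A ∪ evars B := by
  ext w
  simp only [evars, Set.mem_iUnion, Set.mem_union, List.mem_append]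
  constructor
  · rintro ⟨p, hp | hp, hw⟩
    · exact Or.inl ⟨p, hp, hw⟩
    · exact Or.inr ⟨p, hp, hw⟩
  · rintro (⟨p, hp, hw⟩ | ⟨p, hp, hw⟩)
    · exact ⟨p, Or.inl hp, hw⟩
    · exact ⟨p, Or.inr hp, hw⟩

theorem esize_append (A B : List (L.Term V × L.Term V)) :
    esize (A ++ B) = esize A + esize B := by
  simp [esize]

theorem tvars_subset_evars {p : L.Term V × L.Term V} {E : List (L.Term V × L.Term V)}
    (hp : p ∈ E) : tvars p.1 ∪ tvars p.2 ⊆ evars E := by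
  intro w hw
  simp only [evars, Set.mem_iUnion]
  exact ⟨p, hp, hw⟩

/-- The variable-elimination step of unification. -/
theorem var_elim {V : Type*} (n s : ℕ)
    (ihn : ∀ m, m < n → ∀ E : List (L.Term V × L.Term V),
        (evars E).ncard ≤ m →
        (∃ (W : Type w) (θ : V → L.Term W), Unifies θ E) → MGUconc.{w} E)
    (ihs : ∀ r, r < s → ∀ E : List (L.Term V × L.Term V),
        (evars E).ncard ≤ n → esize E ≤ r →
        (∃ (W : Type w) (θ : V → L.Term W), Unifies θ E) → MGUconc.{w} E)
    (v : V) (t : L.Term V) (E' : List (L.Term V × L.Term V))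
    (hn : (evars ((Term.var v, t) :: E')).ncard ≤ n)
    (hs : esize ((Term.var v, t) :: E') ≤ s)
    (hex : ∃ (W : Type w) (θ : V → L.Term W), Unifies θ ((Term.var v, t) :: E')) :
    MGUconc.{w} ((Term.var v, t) :: E') := by
  have hnE' : (evars E').ncard ≤ n := by
    refine le_trans (Set.ncard_le_ncard ?_ (evars_finite _)) hn
    rw [evars_cons]
    exact Set.subset_union_right
  by_cases ht : t = Term.var v
  · subst ht
    have hs' : esize E' < s := by
      have h1 := esize_cons (Term.var v, Term.var v) E'
      have h2 : tsize (Term.var v : L.Term V) = 1 := rfl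
      simp only [h2] at h1
      omega
    obtain ⟨ρ, hρ, hmg⟩ := ihs (esize E') hs' E' hnE' le_rfl
      (by obtain ⟨W, θ, hθ⟩ := hex
          exact ⟨W, θ, fun p hp => hθ p (List.mem_cons_of_mem _ hp)⟩)
    refine ⟨ρ, ?_, ?_⟩
    · intro p hp
      rcases List.mem_cons.1 hp with rfl | hp
      · rfl
      · exact hρ p hp
    · intro W θ hθ
      exact hmg W θ fun p hp => hθ p (List.mem_cons_of_mem _ hp)
  · have hocc : v ∉ tvars t := by
      intro hvt
      obtain ⟨W, θ, hθ⟩ := hex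
      have h1 : θ v = t.subst θ := hθ (Term.var v, t) List.mem_cons_self
      cases t with
      | var w =>
        obtain rfl : v = w := hvt
        exact ht rfl
      | @func m g ss =>
        exact absurd (congrArg tsize h1) (Nat.ne_of_lt (tsize_subst_lt hvt θ))
    have transfer : ∀ (W : Type w) (θ : V → L.Term W),
        Unifies θ ((Term.var v, t) :: E') →
        Unifies θ (E'.map fun p => (p.1.subst (elimSubst v t), p.2.subst (elimSubst v t))) := by
      intro W θ hθ p hp
      obtain ⟨q, hq, rfl⟩ := List.mem_map.1 hp
      have hfix := elimSubst_fixes v t θ (hθ (Term.var v, t) List.mem_cons_self)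
      simp only [subst_subst]
      rw [← subst_congr (σ := θ) fun a _ => hfix a,
        ← subst_congr (σ := θ) fun a _ => hfix a]
      exact hθ q (List.mem_cons_of_mem _ hq)
    have hvE : v ∈ evars ((Term.var v, t) :: E') := by
      rw [evars_cons]
      exact Or.inl (Or.inl rfl)
    have hsub : evars (E'.map fun p =>
          (p.1.subst (elimSubst v t), p.2.subst (elimSubst v t))) ⊆
        evars ((Term.var v, t) :: E') \ {v} := by
      intro w hw
      simp only [evars, Set.mem_iUnion, Set.mem_union] at hw
      obtain ⟨p, hp, hw⟩ := hw
      obtain ⟨q, hq, rfl⟩ := List.mem_map.1 hp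
      have hq1 : tvars q.1 ∪ tvars q.2 ⊆ evars ((Term.var v, t) :: E') :=
        le_trans (tvars_subset_evars hq) (by rw [evars_cons]; exact Set.subset_union_right)
      have htE : tvars t ⊆ evars ((Term.var v, t) :: E') := by
        rw [evars_cons]
        exact le_trans Set.subset_union_right Set.subset_union_left
      rcases hw with hw | hw
      · have h2 := tvars_subst_elimSubst hocc q.1 hw
        refine ⟨?_, h2.2⟩
        rcases h2.1 with h3 | h3
        · exact hq1 (Or.inl h3)
        · exact htE h3
      · have h2 := tvars_subst_elimSubst hocc q.2 hw
        refine ⟨?_, h2.2⟩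
        rcases h2.1 with h3 | h3
        · exact hq1 (Or.inr h3)
        · exact htE h3
    have hlt : (evars (E'.map fun p =>
        (p.1.subst (elimSubst v t), p.2.subst (elimSubst v t)))).ncard < n := by
      calc (evars _).ncard ≤ (evars ((Term.var v, t) :: E') \ {v}).ncard :=
            Set.ncard_le_ncard hsub ((evars_finite _).diff)
        _ < (evars ((Term.var v, t) :: E')).ncard :=
            Set.ncard_diff_singleton_lt_of_mem hvE (evars_finite _)
        _ ≤ n := hn
    obtain ⟨ρ₂, h₂u, h₂mg⟩ := ihn _ hlt _ le_rfl
      (by obtain ⟨W, θ, hθ⟩ := hex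
          exact ⟨W, θ, transfer W θ hθ⟩)
    refine ⟨fun w => (elimSubst v t w).subst ρ₂, ?_, ?_⟩
    · intro p hp
      rcases List.mem_cons.1 hp with rfl | hp
      · calc (Term.var v).subst (fun w => (elimSubst v t w).subst ρ₂)
            = (elimSubst v t v).subst ρ₂ := rfl
          _ = (t.subst (elimSubst v t)).subst ρ₂ := by
              rw [elimSubst_same, subst_elimSubst_self hocc]
          _ = t.subst (fun w => (elimSubst v t w).subst ρ₂) := subst_subst _ _ _
      · rw [← subst_subst, ← subst_subst]
        exact h₂u (p.1.subst (elimSubst v t), p.2.subst (elimSubst v t))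
          (List.mem_map.2 ⟨p, hp, rfl⟩)
    · intro W θ hθ w
      have hfix := elimSubst_fixes v t θ (hθ (Term.var v, t) List.mem_cons_self)
      have h2 := h₂mg W θ (transfer W θ hθ)
      calc θ w = (elimSubst v t w).subst θ := hfix w
        _ = (elimSubst v t w).subst (fun u => (ρ₂ u).subst θ) :=
            subst_congr fun a _ => h2 a
        _ = ((elimSubst v t w).subst ρ₂).subst θ := (subst_subst _ _ _).symm

theorem unifies_decomp {W : Type*} {l : ℕ} (θ' : V → L.Term W) (f : L.Functions l)
    (ts ss : Fin l → L.Term V) (E' : List (L.Term V × L.Term V)) :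
    Unifies θ' ((Term.func f ts, Term.func f ss) :: E') ↔
    Unifies θ' ((List.ofFn fun i => (ts i, ss i)) ++ E') := by
  constructor
  · intro h p hp
    rcases List.mem_append.1 hp with hp | hp
    · obtain ⟨i, rfl⟩ := List.mem_ofFn.1 hp
      have hh := h (Term.func f ts, Term.func f ss) List.mem_cons_self
      simp only [Term.subst] at hh
      injection hh with hh1 hh2 hh3
      exact congrFun hh3 i
    · exact h p (List.mem_cons_of_mem _ hp)
  · intro h p hp
    rcases List.mem_cons.1 hp with rfl | hp
    · show (Term.func f ts).subst θ' = (Term.func f ss).subst θ'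
      simp only [Term.subst]
      congr 1
      funext i
      exact h (ts i, ss i) (List.mem_append.2 (Or.inl (List.mem_ofFn.2 ⟨i, rfl⟩)))
    · exact h p (List.mem_append.2 (Or.inr hp))

/-- Any unifiable system of term equations admits a most general unifier. -/
theorem mgu_list {V : Type*} : ∀ (n s : ℕ) (E : List (L.Term V × L.Term V)),
    (evars E).ncard ≤ n → esize E ≤ s →
    (∃ (W : Type w) (θ : V → L.Term W), Unifies θ E) → MGUconc.{w} E := by
  intro n
  induction n using Nat.strong_induction_on with
  | _ n ihn =>
  intro s
  induction s using Nat.strong_induction_on with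
  | _ s ihs =>
  intro E hn hs hex
  have ihn' : ∀ m, m < n → ∀ E : List (L.Term V × L.Term V),
      (evars E).ncard ≤ m →
      (∃ (W : Type w) (θ : V → L.Term W), Unifies θ E) → MGUconc.{w} E :=
    fun m hm E hnE hexE => ihn m hm (esize E) E hnE le_rfl hexE
  rcases E with _ | ⟨⟨t₁, t₂⟩, E'⟩
  · exact ⟨Term.var, fun p hp => absurd hp List.not_mem_nil, fun W θ _ w => rfl⟩
  cases t₁ with
  | var v => exact var_elim n s ihn' ihs v t₂ E' hn hs hex
  | @func l f ts =>
    cases t₂ with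
    | var v =>
      have hn' : (evars ((Term.var v, Term.func f ts) :: E')).ncard ≤ n := by
        rwa [← evars_pair_comm]
      have hs' : esize ((Term.var v, Term.func f ts) :: E') ≤ s := by
        rwa [← esize_pair_comm]
      obtain ⟨ρ, hρ, hmg⟩ := var_elim n s ihn' ihs v (Term.func f ts) E' hn' hs'
        (by obtain ⟨W, θ, hθ⟩ := hex
            exact ⟨W, θ, (unifies_swap θ _ _ E').1 hθ⟩)
      exact ⟨ρ, (unifies_swap ρ _ _ E').2 hρ,
        fun W θ hθ => hmg W θ ((unifies_swap θ _ _ E').1 hθ)⟩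
    | @func m g ss =>
      obtain ⟨W, θ, hθ⟩ := hex
      have hhead : (Term.func f ts).subst θ = (Term.func g ss).subst θ :=
        hθ (Term.func f ts, Term.func g ss) List.mem_cons_self
      simp only [Term.subst] at hhead
      injection hhead with h1 h2 h3
      subst h1
      obtain rfl : f = g := eq_of_heq h2
      clear h3
      have hsize : esize ((List.ofFn fun i => (ts i, ss i)) ++ E') <
          esize ((Term.func f ts, Term.func f ss) :: E') := by
        have e1 : esize ((Term.func f ts, Term.func f ss) :: E') =
            (1 + ∑ i, tsize (ts i)) + (1 + ∑ i, tsize (ss i)) + esize E' := by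
          rw [esize_cons]; rfl
        have e2 : esize ((List.ofFn fun i => (ts i, ss i)) ++ E') =
            ((∑ i, tsize (ts i)) + ∑ i, tsize (ss i)) + esize E' := by
          rw [esize_append]
          congr 1
          show (List.map _ (List.ofFn fun i => (ts i, ss i))).sum = _
          rw [List.map_ofFn, List.sum_ofFn, ← Finset.sum_add_distrib]
          rfl
        omega
      have hvsub : evars ((List.ofFn fun i => (ts i, ss i)) ++ E') ⊆
          evars ((Term.func f ts, Term.func f ss) :: E') := by
        rw [evars_append, evars_cons]
        apply Set.union_subset
        · intro w hw
          simp only [evars, Set.mem_iUnion, Set.mem_union] at hw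
          obtain ⟨p, hp, hw⟩ := hw
          obtain ⟨i, rfl⟩ := List.mem_ofFn.1 hp
          refine Or.inl ?_
          rcases hw with hw | hw
          · exact Or.inl (Set.mem_iUnion.2 ⟨i, hw⟩)
          · exact Or.inr (Set.mem_iUnion.2 ⟨i, hw⟩)
        · exact Set.subset_union_right
      obtain ⟨ρ, hρ, hmg⟩ := ihs (esize ((List.ofFn fun i => (ts i, ss i)) ++ E'))
        (lt_of_lt_of_le hsize hs) _
        (le_trans (Set.ncard_le_ncard hvsub (evars_finite _)) hn) le_rfl
        ⟨W, θ, (unifies_decomp θ f ts ss E').1 hθ⟩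
      exact ⟨ρ, (unifies_decomp ρ f ts ss E').2 hρ, fun W' θ' hθ' => hmg W' θ' ((unifies_decomp θ' f ts ss E').1 hθ')⟩

end FlexRigidAux

/-- Flex-rigid first-order unification: if two terms over a unification context `α ⊕ β`
(with flexible variables `α` and rigid variables `β`) admit a flexible unifier, then they
admit a most general flexible unifier. -/
theorem exists_mostGeneral_flexibleUnifier {L : Language} {α : Type u} {β : Type u'}
    (t₁ t₂ : L.Term (α ⊕ β))
    (h : ∃ (γ : Type v) (σ : α → L.Term γ),
      t₁.subst (liftSubst σ) = t₂.subst (liftSubst σ)) :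
    ∃ (δ : Type u) (ρ : α → L.Term δ),
      t₁.subst (liftSubst ρ) = t₂.subst (liftSubst ρ) ∧
      ∀ (γ : Type v) (σ : α → L.Term γ),
        t₁.subst (liftSubst σ) = t₂.subst (liftSubst σ) →
          ∃ τ : δ → L.Term γ, ∀ a : α, σ a = (ρ a).subst τ := by
  classical
  obtain ⟨γ₀, σ₀, hσ₀⟩ := h
  have huσ : ∀ (γ : Type v) (σ : α → L.Term γ),
      t₁.subst (liftSubst σ) = t₂.subst (liftSubst σ) →
      FlexRigidAux.Unifies (liftSubst (β := β) σ) [(t₁, t₂)] := by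
    intro γ σ hσ p hp
    rcases List.mem_cons.1 hp with rfl | hp
    · exact hσ
    · simp at hp
  obtain ⟨ρ', hρ'u, hmg⟩ := FlexRigidAux.mgu_list
    ((FlexRigidAux.evars [(t₁, t₂)]).ncard) (FlexRigidAux.esize [(t₁, t₂)]) [(t₁, t₂)]
    le_rfl le_rfl ⟨γ₀ ⊕ β, liftSubst σ₀, huσ γ₀ σ₀ hσ₀⟩
  have h0 := hmg _ (liftSubst σ₀) (huσ γ₀ σ₀ hσ₀)
  have hinr : ∀ b : β, ρ' (Sum.inr b) = Term.var (Sum.inr b) := by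
    intro b
    have h1 : (Term.var (Sum.inr b) : L.Term (γ₀ ⊕ β)) =
        (ρ' (Sum.inr b)).subst (liftSubst σ₀) := h0 (Sum.inr b)
    cases hr : ρ' (Sum.inr b) with
    | var x =>
      rw [hr] at h1
      cases x with
      | inl a =>
        exfalso
        have h2 : (Term.var (Sum.inr b) : L.Term (γ₀ ⊕ β)) = (σ₀ a).relabel Sum.inl := h1
        cases hσa : σ₀ a with
        | var c => rw [hσa] at h2; simp [Term.relabel] at h2
        | func f ts => rw [hσa] at h2; simp [Term.relabel] at h2
      | inr b' =>
        have h2 : (Term.var (Sum.inr b) : L.Term (γ₀ ⊕ β)) = Term.var (Sum.inr b') := h1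
        injection h2 with h3
        injection h3 with h4
        rw [h4]
    | func f ts =>
      exfalso
      rw [hr] at h1
      simp only [Term.subst] at h1
      injection h1
  have hinl : ∀ a : α, FlexRigidAux.tvars (ρ' (Sum.inl a)) ⊆ Set.range Sum.inl := by
    intro a w hw
    cases w with
    | inl a' => exact ⟨a', rfl⟩
    | inr b =>
      exfalso
      have h1 : (σ₀ a).relabel Sum.inl =
          (ρ' (Sum.inl a)).subst (liftSubst σ₀) := h0 (Sum.inl a)
      have h2 : (Sum.inr b : γ₀ ⊕ β) ∈
          FlexRigidAux.tvars ((ρ' (Sum.inl a)).subst (liftSubst σ₀)) := by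
        rw [FlexRigidAux.tvars_subst]
        simp only [Set.mem_iUnion]
        exact ⟨Sum.inr b, hw, rfl⟩
      rw [← h1, FlexRigidAux.tvars_relabel] at h2
      obtain ⟨x, -, hx⟩ := h2
      exact Sum.inl_ne_inr hx
  choose ρ hρ using fun a =>
    FlexRigidAux.exists_unrelabel (f := Sum.inl) (ρ' (Sum.inl a)) (hinl a)
  have hlift : liftSubst (β := β) ρ = ρ' := by
    funext w
    cases w with
    | inl a => exact (hρ a).symm
    | inr b => exact (hinr b).symm
  refine ⟨α, ρ, ?_, ?_⟩
  · have := hρ'u (t₁, t₂) List.mem_cons_self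
    rwa [hlift]
  · intro γ σ hσ
    refine ⟨σ, fun a => ?_⟩
    have h1 : (σ a).relabel Sum.inl = (ρ' (Sum.inl a)).subst (liftSubst σ) :=
      hmg _ (liftSubst σ) (huσ γ σ hσ) (Sum.inl a)
    rw [hρ a, FlexRigidAux.subst_relabel] at h1
    have h2 : (ρ a).subst ((liftSubst (β := β) σ) ∘ Sum.inl) =
        ((ρ a).subst σ).relabel Sum.inl := by
      rw [show (liftSubst (β := β) σ) ∘ Sum.inl = fun a' => (σ a').relabel Sum.inl from rfl,
        ← FlexRigidAux.relabel_subst]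
    rw [h2] at h1
    exact FlexRigidAux.relabel_injective Sum.inl_injective h1
end
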